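/- The Weyl curvature operator of the Fubini–Study metric of ℂP² at any point, written in the basis (φ₁,φ₂,φ₃,ψ₁,ψ₂,ψ₃) of Λ² adapted to the complex structure, is diag(4, −2, −2, 0, 0, 0); in particular every eigenvector of the Weyl operator lies in Λ⁺ or Λ⁻, hence is non-simple, so the Weyl operator does not satisfy the eigenflag condition at any point. -/

import Mathlib

/-!
Symmetry of `W` makes its kernel `Λ⁻` orthogonal to its range, which contains `Λ⁺`; as
`Λ² = Λ⁺ ⊕ Λ⁻`, every eigenvector of `W` lies in `Λ⁺` or in `Λ⁻`. A simple 2-vector `ξ = x ∧ y`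
satisfies `ξ ∧ ξ = 0`, i.e. `|ξ⁺| = |ξ⁻|`, so it lies in neither unless it vanishes. If `W`
preserved `v ∧ v⊥`, this 3-dimensional space of simple 2-vectors would contain an eigenvector
of the symmetric operator `W`.
-/

open scoped InnerProductSpace RealInnerProductSpace
open Module Submodule

theorem Submodule.mem_of_add_mem_of_sub_mem {K M : Type*} [Field K] [CharZero K]
    [AddCommGroup M] [Module K M] {p : Submodule K M} {x y : M}
    (h₁ : x + y ∈ p) (h₂ : x - y ∈ p) : x ∈ p ∧ y ∈ p := by
  have hx : x = (2 : K)⁻¹ • ((x + y) + (x - y)) := by module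
  have hy : y = (2 : K)⁻¹ • ((x + y) - (x - y)) := by module
  exact ⟨hx ▸ p.smul_mem _ (p.add_mem h₁ h₂), hy ▸ p.smul_mem _ (p.sub_mem h₁ h₂)⟩

theorem LinearMap.apply_mem_of_basis {R M N P ι κ : Type*} [CommRing R]
    [AddCommGroup M] [Module R M] [AddCommGroup N] [Module R N] [AddCommGroup P] [Module R P]
    (b : Basis ι R M) (b' : Basis κ R N) (B : M →ₗ[R] N →ₗ[R] P) {p : Submodule R P}
    (h : ∀ i j, B (b i) (b' j) ∈ p) (x : M) (y : N) : B x y ∈ p := by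
  have hB : B.compr₂ p.mkQ = 0 :=
    LinearMap.ext_basis b b' fun i j => (Submodule.Quotient.mk_eq_zero p).2 (h i j)
  simpa using (Submodule.Quotient.mk_eq_zero p).1 (LinearMap.congr_fun₂ hB x y)

section InnerProductSpace

variable {𝕜 E : Type*} [RCLike 𝕜] [NormedAddCommGroup E] [InnerProductSpace 𝕜 E]

theorem Submodule.mem_orthogonal_span {s : Set E} {ξ : E} (h : ∀ u ∈ s, ⟪u, ξ⟫_𝕜 = 0) :
    ξ ∈ (span 𝕜 s)ᗮ :=
  (isOrtho_span.2 fun _ hu _ hv => (Set.mem_singleton_iff.1 hv) ▸ h _ hu).ge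
    (mem_span_singleton_self ξ)

theorem Submodule.IsOrtho.orthogonal_le_of_sup_eq_top {K L : Submodule 𝕜 E} (hKL : K ⟂ L)
    (hsup : K ⊔ L = ⊤) : Lᗮ ≤ K := by
  intro ξ hξ
  obtain ⟨a, ha, b, hb, rfl⟩ := mem_sup.1 (hsup ▸ mem_top : ξ ∈ K ⊔ L)
  have hb0 : b = 0 := by
    rw [← inner_self_eq_zero (𝕜 := 𝕜)]
    simpa [inner_add_right, hKL.symm.inner_eq hb ha] using inner_right_of_mem_orthogonal hb hξ
  simpa [hb0] using ha

end InnerProductSpace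

section Real

variable {E : Type*} [NormedAddCommGroup E] [InnerProductSpace ℝ E]

theorem LinearMap.mem_range_of_apply_eq_smul {T : E →ₗ[ℝ] E} {x : E} {c : ℝ} (hc : c ≠ 0)
    (h : T x = c • x) : x ∈ range T :=
  ⟨c⁻¹ • x, by rw [map_smul, h, smul_smul, inv_mul_cancel₀ hc, one_smul]⟩

/-- `ker T = (range T)ᗮ`: eigenvectors of eigenvalue `0` are orthogonal to `K ≤ range T`, the
others lie in `range T` and so are orthogonal to `L ≤ ker T`. -/
theorem LinearMap.IsSymmetric.mem_or_mem_of_apply_eq_smul {T : E →ₗ[ℝ] E} (hT : T.IsSymmetric)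
    {K L : Submodule ℝ E} (hKL : K ⟂ L) (hsup : K ⊔ L = ⊤) (hK : K ≤ range T) (hL : L ≤ ker T)
    {ξ : E} {μ : ℝ} (hξ : T ξ = μ • ξ) : ξ ∈ K ∨ ξ ∈ L := by
  by_cases hμ : μ = 0
  · have hker : ξ ∈ ker T := by simp [hξ, hμ]
    refine Or.inr (hKL.symm.orthogonal_le_of_sup_eq_top (sup_comm K L ▸ hsup) ?_)
    exact orthogonal_le hK (hT.orthogonal_range ▸ hker)
  · have hrange : range T ⟂ L := (isOrtho_iff_le.2 (hT.orthogonal_range ▸ hL)).symm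
    exact Or.inl <| hKL.orthogonal_le_of_sup_eq_top hsup <|
      hrange.le (mem_range_of_apply_eq_smul hμ hξ)

theorem LinearMap.IsSymmetric.exists_eigenvector_mem [FiniteDimensional ℝ E] {T : E →ₗ[ℝ] E}
    (hT : T.IsSymmetric) {K : Submodule ℝ E} (hK : K ≠ ⊥) (hTK : ∀ x ∈ K, T x ∈ K) :
    ∃ ξ ∈ K, ξ ≠ 0 ∧ ∃ μ : ℝ, T ξ = μ • ξ := by
  have : Nontrivial K := nontrivial_iff_ne_bot.2 hK
  obtain ⟨ξ, hξ⟩ :=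
    (hT.restrict_invariant hTK).hasEigenvalue_iSup_of_finiteDimensional.exists_hasEigenvector
  exact ⟨ξ, ξ.2, fun h => hξ.2 (Subtype.ext h), _, congrArg Subtype.val hξ.apply_eq_smul⟩

theorem exists_ne_zero_inner_eq_zero [FiniteDimensional ℝ E] (h : 1 < finrank ℝ E) (v : E) :
    ∃ u : E, u ≠ 0 ∧ ⟪v, u⟫ = 0 := by
  have hdim := (ℝ ∙ v).finrank_add_finrank_orthogonal
  have hv : finrank ℝ (ℝ ∙ v) ≤ 1 := by simpa using finrank_span_le_card ({v} : Set E)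
  have hne : (ℝ ∙ v)ᗮ ≠ ⊥ := fun hbot => by
    rw [hbot, finrank_bot] at hdim; omega
  obtain ⟨u, hu, hu0⟩ := exists_mem_ne_zero_of_ne_bot hne
  exact ⟨u, hu0, mem_orthogonal_singleton_iff_inner_right.1 hu⟩

theorem sum_sq_inner_eq_zero_of_mem_orthogonal {a b c ξ : E} (h : ξ ∈ (span ℝ {a, b, c})ᗮ) :
    ⟪a, ξ⟫ ^ 2 + ⟪b, ξ⟫ ^ 2 + ⟪c, ξ⟫ ^ 2 = 0 := by
  have hz : ∀ u ∈ ({a, b, c} : Set E), ⟪u, ξ⟫ = 0 := fun _ hu =>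
    inner_right_of_mem_orthogonal (subset_span hu) h
  simp [hz a (by simp), hz b (by simp), hz c (by simp)]

theorem eq_zero_of_mem_span_of_sum_sq_inner_eq_zero {a b c ξ : E} (hξ : ξ ∈ span ℝ {a, b, c})
    (h : ⟪a, ξ⟫ ^ 2 + ⟪b, ξ⟫ ^ 2 + ⟪c, ξ⟫ ^ 2 = 0) : ξ = 0 := by
  obtain ⟨ha, hb, hc⟩ : ⟪a, ξ⟫ = 0 ∧ ⟪b, ξ⟫ = 0 ∧ ⟪c, ξ⟫ = 0 := by
    refine ⟨?_, ?_, ?_⟩ <;> nlinarith [sq_nonneg ⟪a, ξ⟫, sq_nonneg ⟪b, ξ⟫, sq_nonneg ⟪c, ξ⟫]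
  refine (orthogonal_disjoint _).le_bot ⟨hξ, mem_orthogonal_span ?_⟩
  simp only [Set.mem_insert_iff, Set.mem_singleton_iff]
  rintro u (rfl | rfl | rfl) <;> assumption

end Real

section Wedge

variable {V E : Type*} [NormedAddCommGroup V] [InnerProductSpace ℝ V]
  [NormedAddCommGroup E] [InnerProductSpace ℝ E] {w : V →ₗ[ℝ] V →ₗ[ℝ] E}

theorem span_wedge_orthogonal_eq_map (v : V) :
    span ℝ {ξ : E | ∃ u : V, ⟪v, u⟫ = 0 ∧ ξ = w v u} = (ℝ ∙ v)ᗮ.map (w v) := by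
  rw [← span_eq ((ℝ ∙ v)ᗮ.map (w v))]
  congr 1
  ext ξ
  simp [mem_orthogonal_singleton_iff_inner_right, eq_comm]

theorem map_orthogonal_ne_bot [FiniteDimensional ℝ V]
    (hinner : ∀ a b c d : V, ⟪w a b, w c d⟫ = ⟪a, c⟫ * ⟪b, d⟫ - ⟪a, d⟫ * ⟪b, c⟫)
    (hdim : 1 < finrank ℝ V) {v : V} (hv : v ≠ 0) : (ℝ ∙ v)ᗮ.map (w v) ≠ ⊥ := by
  obtain ⟨u, hu, hvu⟩ := exists_ne_zero_inner_eq_zero hdim v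
  have hnorm : ⟪w v u, w v u⟫ = ‖v‖ ^ 2 * ‖u‖ ^ 2 := by
    rw [hinner, hvu, real_inner_self_eq_norm_sq, real_inner_self_eq_norm_sq]; ring
  refine (Submodule.ne_bot_iff _).2
    ⟨w v u, mem_map_of_mem (mem_orthogonal_singleton_iff_inner_right.2 hvu), fun h0 => ?_⟩
  rw [h0, inner_zero_left] at hnorm
  simp [hv, hu] at hnorm

theorem not_invariant_span_wedge_orthogonal [FiniteDimensional ℝ V] [FiniteDimensional ℝ E]
    (hinner : ∀ a b c d : V, ⟪w a b, w c d⟫ = ⟪a, c⟫ * ⟪b, d⟫ - ⟪a, d⟫ * ⟪b, c⟫)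
    (hdim : 1 < finrank ℝ V) {T : E →ₗ[ℝ] E} (hT : T.IsSymmetric)
    (hsimple : ∀ (ξ : E) (μ : ℝ), ξ ≠ 0 → T ξ = μ • ξ → ¬ ∃ x y : V, ξ = w x y)
    {v : V} (hv : v ≠ 0) :
    ¬ ∀ ξ ∈ span ℝ {ξ : E | ∃ u : V, ⟪v, u⟫ = 0 ∧ ξ = w v u},
        T ξ ∈ span ℝ {ξ : E | ∃ u : V, ⟪v, u⟫ = 0 ∧ ξ = w v u} := by
  rw [span_wedge_orthogonal_eq_map]
  intro hT_inv
  obtain ⟨ξ, hξ, hξ0, μ, hTξ⟩ :=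
    hT.exists_eigenvector_mem (map_orthogonal_ne_bot hinner hdim hv) hT_inv
  obtain ⟨u, -, rfl⟩ := mem_map.1 hξ
  exact hsimple _ μ hξ0 hTξ ⟨v, u, rfl⟩

variable (e : OrthonormalBasis (Fin 4) ℝ V)

variable (w) in
/-- `Λ⁺ = span (φ₁, φ₂, φ₃)`; `antiSelfDual` is `Λ⁻ = span (ψ₁, ψ₂, ψ₃)`. -/
def selfDual : Submodule ℝ E :=
  span ℝ {w (e 0) (e 1) + w (e 2) (e 3), w (e 0) (e 2) - w (e 1) (e 3),
    w (e 0) (e 3) + w (e 1) (e 2)}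

variable (w) in
def antiSelfDual : Submodule ℝ E :=
  span ℝ {w (e 0) (e 1) - w (e 2) (e 3), w (e 0) (e 2) + w (e 1) (e 3),
    w (e 0) (e 3) - w (e 1) (e 2)}

theorem selfDual_sup_antiSelfDual (halt : w.IsAlt)
    (hspan : span ℝ {ξ : E | ∃ x y : V, ξ = w x y} = ⊤) :
    selfDual w e ⊔ antiSelfDual w e = ⊤ := by
  set M := selfDual w e ⊔ antiSelfDual w e
  have h01 := mem_of_add_mem_of_sub_mem (p := M) (mem_sup_left (subset_span (by simp)))
    (mem_sup_right (subset_span (by simp)) : w (e 0) (e 1) - w (e 2) (e 3) ∈ M)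
  have h02 := mem_of_add_mem_of_sub_mem (p := M) (mem_sup_right (subset_span (by simp)))
    (mem_sup_left (subset_span (by simp)) : w (e 0) (e 2) - w (e 1) (e 3) ∈ M)
  have h03 := mem_of_add_mem_of_sub_mem (p := M) (mem_sup_left (subset_span (by simp)))
    (mem_sup_right (subset_span (by simp)) : w (e 0) (e 3) - w (e 1) (e 2) ∈ M)
  have hlt : ∀ i j : Fin 4, i < j → w (e i) (e j) ∈ M := by
    intro i j hij
    fin_cases i <;> fin_cases j <;> simp_all
  have hbasis : ∀ i j, w (e i) (e j) ∈ M := by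
    intro i j
    rcases lt_trichotomy i j with hij | rfl | hij
    · exact hlt i j hij
    · simp [halt.self_eq_zero]
    · exact halt.neg (e j) (e i) ▸ neg_mem (hlt j i hij)
  rw [eq_top_iff, ← hspan, span_le]
  rintro _ ⟨x, y, rfl⟩
  exact w.apply_mem_of_basis e.toBasis e.toBasis (by simpa using hbasis) x y

variable (hinner : ∀ a b c d : V, ⟪w a b, w c d⟫ = ⟪a, c⟫ * ⟪b, d⟫ - ⟪a, d⟫ * ⟪b, c⟫)
include hinner

theorem selfDual_isOrtho_antiSelfDual : selfDual w e ⟂ antiSelfDual w e := by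
  rw [selfDual, antiSelfDual, isOrtho_span]
  simp only [Set.mem_insert_iff, Set.mem_singleton_iff]
  rintro _ (rfl | rfl | rfl) _ (rfl | rfl | rfl) <;>
    simp only [inner_add_left, inner_add_right, inner_sub_left, inner_sub_right, hinner,
      e.inner_eq_ite] <;> simp +decide

/-- The Plücker relation `ξ ∧ ξ = 0` of a simple 2-vector, written as `|ξ⁺|² = |ξ⁻|²`. -/
theorem sum_sq_inner_selfDual_eq_antiSelfDual (x y : V) :
    ⟪w (e 0) (e 1) + w (e 2) (e 3), w x y⟫ ^ 2 + ⟪w (e 0) (e 2) - w (e 1) (e 3), w x y⟫ ^ 2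
      + ⟪w (e 0) (e 3) + w (e 1) (e 2), w x y⟫ ^ 2 =
    ⟪w (e 0) (e 1) - w (e 2) (e 3), w x y⟫ ^ 2 + ⟪w (e 0) (e 2) + w (e 1) (e 3), w x y⟫ ^ 2
      + ⟪w (e 0) (e 3) - w (e 1) (e 2), w x y⟫ ^ 2 := by
  simp only [inner_add_left, inner_sub_left, hinner]
  ring

theorem eq_zero_of_mem_selfDual_or_antiSelfDual {x y : V}
    (h : w x y ∈ selfDual w e ∨ w x y ∈ antiSelfDual w e) : w x y = 0 := by
  have hsq := sum_sq_inner_selfDual_eq_antiSelfDual e hinner x y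
  have hortho := selfDual_isOrtho_antiSelfDual e hinner
  rcases h with h | h
  · exact eq_zero_of_mem_span_of_sum_sq_inner_eq_zero h
      (hsq.trans (sum_sq_inner_eq_zero_of_mem_orthogonal (hortho.le h)))
  · exact eq_zero_of_mem_span_of_sum_sq_inner_eq_zero h
      (hsq.symm.trans (sum_sq_inner_eq_zero_of_mem_orthogonal (hortho.ge h)))

end Wedge

/-- The curvature operator `R` of the Fubini–Study metric of `ℂP²` at a point (acting on
`Λ²` modelled by `E` via the alternating map `w`, in the basis `φ₁, φ₂, φ₃, ψ₁, ψ₂, ψ₃`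
adapted to the complex structure) satisfies `R φ₁ = 6φ₁`, `R φ₂ = R φ₃ = 0`,
`R ψᵢ = 2ψᵢ`.  Its Weyl part `W = R − (s/12)·Id = R − 2·Id` is `diag(4, −2, −2, 0, 0, 0)`
in this basis; every eigenvector of `W` lies in `Λ⁺` or `Λ⁻`, hence is non-simple, and
`W` does not satisfy the eigenflag condition. -/
theorem fubini_study_weyl_no_eigenflag
    {V E : Type*} [NormedAddCommGroup V] [InnerProductSpace ℝ V]
    [NormedAddCommGroup E] [InnerProductSpace ℝ E]
    [FiniteDimensional ℝ V] [FiniteDimensional ℝ E]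
    (e : OrthonormalBasis (Fin 4) ℝ V)
    (w : V →ₗ[ℝ] V →ₗ[ℝ] E)
    (halt : ∀ x : V, w x x = 0)
    (hinner : ∀ a b c d : V, ⟪w a b, w c d⟫ = ⟪a, c⟫ * ⟪b, d⟫ - ⟪a, d⟫ * ⟪b, c⟫)
    (hspan : Submodule.span ℝ {ξ : E | ∃ x y : V, ξ = w x y} = ⊤)
    (R : E →ₗ[ℝ] E) (hRsym : R.IsSymmetric)
    (hφ₁ : R (w (e 0) (e 1) + w (e 2) (e 3)) = (6 : ℝ) • (w (e 0) (e 1) + w (e 2) (e 3)))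
    (hφ₂ : R (w (e 0) (e 2) - w (e 1) (e 3)) = 0)
    (hφ₃ : R (w (e 0) (e 3) + w (e 1) (e 2)) = 0)
    (hψ₁ : R (w (e 0) (e 1) - w (e 2) (e 3)) = (2 : ℝ) • (w (e 0) (e 1) - w (e 2) (e 3)))
    (hψ₂ : R (w (e 0) (e 2) + w (e 1) (e 3)) = (2 : ℝ) • (w (e 0) (e 2) + w (e 1) (e 3)))
    (hψ₃ : R (w (e 0) (e 3) - w (e 1) (e 2)) = (2 : ℝ) • (w (e 0) (e 3) - w (e 1) (e 2)))
    (W : E →ₗ[ℝ] E) (hWdef : W = R - (2 : ℝ) • LinearMap.id) :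
    W (w (e 0) (e 1) + w (e 2) (e 3)) = (4 : ℝ) • (w (e 0) (e 1) + w (e 2) (e 3)) ∧
    W (w (e 0) (e 2) - w (e 1) (e 3)) = (-2 : ℝ) • (w (e 0) (e 2) - w (e 1) (e 3)) ∧
    W (w (e 0) (e 3) + w (e 1) (e 2)) = (-2 : ℝ) • (w (e 0) (e 3) + w (e 1) (e 2)) ∧
    W (w (e 0) (e 1) - w (e 2) (e 3)) = 0 ∧
    W (w (e 0) (e 2) + w (e 1) (e 3)) = 0 ∧
    W (w (e 0) (e 3) - w (e 1) (e 2)) = 0 ∧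
    (∀ (ξ : E) (μ : ℝ), W ξ = μ • ξ →
      ξ ∈ Submodule.span ℝ ({w (e 0) (e 1) + w (e 2) (e 3),
        w (e 0) (e 2) - w (e 1) (e 3), w (e 0) (e 3) + w (e 1) (e 2)} : Set E) ∨
      ξ ∈ Submodule.span ℝ ({w (e 0) (e 1) - w (e 2) (e 3),
        w (e 0) (e 2) + w (e 1) (e 3), w (e 0) (e 3) - w (e 1) (e 2)} : Set E)) ∧
    (∀ (ξ : E) (μ : ℝ), ξ ≠ 0 → W ξ = μ • ξ → ¬ ∃ x y : V, ξ = w x y) ∧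
    ¬ ∃ v : V, ‖v‖ = 1 ∧
      ∀ ξ ∈ Submodule.span ℝ {ξ : E | ∃ u : V, ⟪v, u⟫ = 0 ∧ ξ = w v u},
        W ξ ∈ Submodule.span ℝ {ξ : E | ∃ u : V, ⟪v, u⟫ = 0 ∧ ξ = w v u} := by
  set φ₁ := w (e 0) (e 1) + w (e 2) (e 3)
  set φ₂ := w (e 0) (e 2) - w (e 1) (e 3)
  set φ₃ := w (e 0) (e 3) + w (e 1) (e 2)
  set ψ₁ := w (e 0) (e 1) - w (e 2) (e 3)
  set ψ₂ := w (e 0) (e 2) + w (e 1) (e 3)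
  set ψ₃ := w (e 0) (e 3) - w (e 1) (e 2)
  have hW : ∀ ξ, W ξ = R ξ - (2 : ℝ) • ξ := fun ξ => by simp [hWdef]
  have hW₁ : W φ₁ = (4 : ℝ) • φ₁ := by rw [hW, hφ₁]; module
  have hW₂ : W φ₂ = (-2 : ℝ) • φ₂ := by rw [hW, hφ₂]; module
  have hW₃ : W φ₃ = (-2 : ℝ) • φ₃ := by rw [hW, hφ₃]; module
  have hW₄ : W ψ₁ = 0 := by rw [hW, hψ₁, sub_self]
  have hW₅ : W ψ₂ = 0 := by rw [hW, hψ₂, sub_self]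
  have hW₆ : W ψ₃ = 0 := by rw [hW, hψ₃, sub_self]
  have hWsym : W.IsSymmetric := hWdef ▸ hRsym.sub (LinearMap.IsSymmetric.id.smul (by simp))
  have hrange : selfDual w e ≤ LinearMap.range W := span_le.2 <| by
    simp only [Set.insert_subset_iff, Set.singleton_subset_iff, SetLike.mem_coe]
    exact ⟨LinearMap.mem_range_of_apply_eq_smul (by norm_num) hW₁,
      LinearMap.mem_range_of_apply_eq_smul (by norm_num) hW₂,
      LinearMap.mem_range_of_apply_eq_smul (by norm_num) hW₃⟩
  have hker : antiSelfDual w e ≤ LinearMap.ker W := span_le.2 <| by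
    simp only [Set.insert_subset_iff, Set.singleton_subset_iff, SetLike.mem_coe]
    exact ⟨hW₄, hW₅, hW₆⟩
  have heigen : ∀ (ξ : E) (μ : ℝ), W ξ = μ • ξ → ξ ∈ selfDual w e ∨ ξ ∈ antiSelfDual w e :=
    fun ξ μ => hWsym.mem_or_mem_of_apply_eq_smul (selfDual_isOrtho_antiSelfDual e hinner)
      (selfDual_sup_antiSelfDual e halt hspan) hrange hker
  have hsimple : ∀ (ξ : E) (μ : ℝ), ξ ≠ 0 → W ξ = μ • ξ → ¬ ∃ x y : V, ξ = w x y := by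
    rintro ξ μ hξ hWξ ⟨x, y, rfl⟩
    exact hξ (eq_zero_of_mem_selfDual_or_antiSelfDual e hinner (heigen _ μ hWξ))
  refine ⟨hW₁, hW₂, hW₃, hW₄, hW₅, hW₆, heigen, hsimple, ?_⟩
  rintro ⟨v, hv, hflag⟩
  have hdim : 1 < finrank ℝ V := by simp [finrank_eq_card_basis e.toBasis]
  have hv0 : v ≠ 0 := norm_ne_zero_iff.1 (hv ▸ one_ne_zero)
  exact not_invariant_span_wedge_orthogonal hinner hdim hWsym hsimple hv0 hflag
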